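/- Let G be a connected 3-regular graph and let f, g: E(G) → {0,1} have the same parity (i.e., Σ_e f(e) ≡ Σ_e g(e) mod 2). Then the CFI graphs X_f(G) and X_g(G) are isomorphic (as colored graphs). -/
import Mathlib


open SimpleGraph

variable {V : Type*} [Fintype V] [DecidableEq V]

/-- Vertices of the CFI graph `X_f(G)`: a middle vertex `(v, T)` for each vertex `v`
of `G` and each even subset `T` of the neighbors of `v` (encoding the even-parity
bit-vector `b_u = [u ∈ T]`), and an edge vertex `(v, u, b)` for each directed edge
`(v,u)` of `G` and `b ∈ {0,1}`. -/
def CFIVert (G : SimpleGraph V) [DecidableRel G.Adj] : Type _ :=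
  {x : (V × Finset V) ⊕ (V × V × Bool) //
    Sum.elim (fun p => p.2 ⊆ G.neighborFinset p.1 ∧ Even p.2.card)
      (fun p => G.Adj p.1 p.2.1) x}

/-- The CFI graph `X_f(G)` (as an uncolored graph this is `Y_f(G)`): middle vertex
`v_T` is adjacent to edge vertex `(v,u)_b` iff `b = [u ∈ T]`, and edge vertices
`(v,u)_b` and `(u,v)_{b ⊕ f((u,v))}` are joined for every edge `(u,v)` of `G`. -/
def CFIGraph (G : SimpleGraph V) [DecidableRel G.Adj] (f : Sym2 V → Bool) :
    SimpleGraph (CFIVert G) :=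
  SimpleGraph.fromRel fun a b =>
    match a.1, b.1 with
    | .inl (v, T), .inr (w, u, c) => v = w ∧ c = decide (u ∈ T)
    | .inr (v, u, c), .inr (v', u', c') => v = u' ∧ u = v' ∧ c' = (c ^^ f s(v, u))
    | _, _ => False

/-- The coloring of `X_f(G)`: each middle vertex of the gadget at `v` is colored by
`v`, and the pair of edge vertices `(v,u)_0, (v,u)_1` is colored by `(v,u)`. -/
def CFIColor (G : SimpleGraph V) [DecidableRel G.Adj] : CFIVert G → V ⊕ (V × V) :=
  fun a => Sum.elim (fun p => Sum.inl p.1) (fun p => Sum.inr (p.1, p.2.1)) a.1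

/-- `f : E(G) → {0,1}` has even parity if the number of edges with `f(e) = 1` is even. -/
def EvenParity (G : SimpleGraph V) [DecidableRel G.Adj] (f : Sym2 V → Bool) : Prop :=
  Even ((G.edgeFinset.filter fun e => f e = true).card)

open Finset
open scoped symmDiff
set_option linter.unusedSectionVars false
set_option linter.unnecessarySeqFocus false
set_option linter.unreachableTactic false
set_option linter.unusedTactic false

namespace CFIAux

variable {V : Type*} [Fintype V] [DecidableEq V] (G : SimpleGraph V) [DecidableRel G.Adj]

lemma even_iff_cast_zero (n : ℕ) : Even n ↔ (n : ZMod 2) = 0 := by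
  rw [ZMod.natCast_eq_zero_iff, Nat.even_iff]
  omega

lemma even_symmDiff_card {α : Type*} [DecidableEq α] (s t : Finset α) :
    Even (s ∆ t).card ↔ (Even s.card ↔ Even t.card) := by
  have h0 : s ∆ t = (s \ t) ∪ (t \ s) := symmDiff_def s t
  have h1 : (s ∆ t).card = (s \ t).card + (t \ s).card := by
    rw [h0, card_union_of_disjoint (disjoint_sdiff_sdiff)]
  have h2 := card_sdiff_add_card_inter s t
  have h3 := card_sdiff_add_card_inter t s
  rw [inter_comm] at h3
  rw [Nat.even_iff, Nat.even_iff, Nat.even_iff]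
  omega

/-- Parity (in `ZMod 2`) of the number of neighbors `u` of `v` with `a v u = true`. -/
def dP (a : V → V → Bool) (v : V) : ZMod 2 :=
  ∑ u ∈ G.neighborFinset v, if a v u = true then 1 else 0

lemma dP_xor (a b : V → V → Bool) (v : V) :
    dP G (fun x y => xor (a x y) (b x y)) v = dP G a v + dP G b v := by
  unfold dP
  rw [← Finset.sum_add_distrib]
  refine Finset.sum_congr rfl fun u _ => ?_
  cases h1 : a v u <;> cases h2 : b v u <;> simp [h1, h2] <;> decide

lemma dP_pair {x y : V} (hxy : G.Adj x y) (v : V) :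
    dP G (fun p q => decide (p = x ∧ q = y)) v = if v = x then 1 else 0 := by
  unfold dP
  rcases eq_or_ne v x with rfl | hv
  · simp [hxy]
  · rw [if_neg hv]
    refine Finset.sum_eq_zero fun u _ => ?_
    simp [hv]

lemma dP_sym_pair {x y : V} (hxy : G.Adj x y) (v : V) :
    dP G (fun p q => decide (s(p, q) = s(x, y))) v =
      (if v = x then 1 else 0) + (if v = y then 1 else 0) := by
  have hne : x ≠ y := hxy.ne
  have hfun : (fun p q => decide (s(p, q) = s(x, y))) =
      fun p q => xor (decide (p = x ∧ q = y)) (decide (p = y ∧ q = x)) := by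
    funext p q
    by_cases h1 : p = x ∧ q = y
    · obtain ⟨rfl, rfl⟩ := h1
      simp [Sym2.eq_iff, hne, hne.symm]
    · by_cases h2 : p = y ∧ q = x
      · obtain ⟨rfl, rfl⟩ := h2
        simp [Sym2.eq_iff, hne, hne.symm]
      · simp [Sym2.eq_iff, h1, h2]
  rw [hfun, dP_xor, dP_pair G hxy, dP_pair G hxy.symm]


/-- Indicator (as an edge-parity function) of the edges used an odd number of
times by a walk. -/
def wInd : {x y : V} → G.Walk x y → Sym2 V → Bool
  | _, _, .nil => fun _ => false
  | _, _, .cons (u := p) (v := q) _ w => fun e => xor (decide (e = s(p, q))) (wInd w e)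

lemma dP_wInd {x y : V} (p : G.Walk x y) (v : V) :
    dP G (fun a b => wInd G p s(a, b)) v =
      (if v = x then 1 else 0) + (if v = y then 1 else 0) := by
  induction p with
  | nil =>
    rename_i z
    have : dP G (fun a b => wInd G (.nil : G.Walk z z) s(a, b)) v = 0 := by
      unfold dP
      exact Finset.sum_eq_zero fun u _ => by simp [wInd]
    rw [this]
    split_ifs <;> decide
  | cons h w ih =>
    rename_i a b c
    have hfun : (fun p q => wInd G (SimpleGraph.Walk.cons h w) s(p, q)) =
        fun p q => xor (decide (s(p, q) = s(a, b))) (wInd G w s(p, q)) := by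
      funext p q
      simp [wInd]
    rw [hfun, dP_xor, dP_sym_pair G h, ih]
    split_ifs <;> decide


lemma exists_a (hconn : G.Connected) (h : Sym2 V → Bool)
    (hpar : Even ((G.edgeFinset.filter fun e => h e = true).card)) :
    ∃ a : V → V → Bool,
      (∀ v u, G.Adj v u → xor (a v u) (a u v) = h s(v, u)) ∧
      (∀ v, dP G a v = 0) := by
  suffices H : ∀ n (h : Sym2 V → Bool),
      (G.edgeFinset.filter fun e => h e = true).card = n → Even n →
      ∃ a : V → V → Bool,
        (∀ v u, G.Adj v u → xor (a v u) (a u v) = h s(v, u)) ∧ (∀ v, dP G a v = 0) by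
    exact H _ h rfl hpar
  intro n
  induction n using Nat.strong_induction_on with
  | _ n ih =>
    intro h hcard hev
    rcases Finset.eq_empty_or_nonempty (G.edgeFinset.filter fun e => h e = true) with
      hemp | hne
    · refine ⟨fun _ _ => false, fun v u hvu => ?_, fun v => ?_⟩
      · have hz : h s(v, u) = false := by
          by_contra hc
          have hm : s(v, u) ∈ G.edgeFinset.filter fun e => h e = true :=
            Finset.mem_filter.2 ⟨mem_edgeFinset.2 (G.mem_edgeSet.2 hvu), by simpa using hc⟩
          simp [hemp] at hm
        simp [hz]
      · exact Finset.sum_eq_zero fun u _ => by simp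
    · obtain ⟨e1, he1⟩ := hne
      have hn2 : 2 ≤ n := by
        have hpos : 0 < n := hcard ▸ Finset.card_pos.2 ⟨e1, he1⟩
        rw [Nat.even_iff] at hev; omega
      have hepos : 0 < ((G.edgeFinset.filter fun e => h e = true).erase e1).card := by
        rw [Finset.card_erase_of_mem he1, hcard]; omega
      obtain ⟨e2, he2⟩ := Finset.card_pos.1 hepos
      have hne12 : e2 ≠ e1 := (Finset.mem_erase.1 he2).1
      have he2' : e2 ∈ G.edgeFinset.filter fun e => h e = true :=
        (Finset.mem_erase.1 he2).2
      obtain ⟨x1, y1, rfl⟩ : ∃ x y, e1 = s(x, y) := by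
        induction e1 using Sym2.ind with | _ x y => exact ⟨x, y, rfl⟩
      obtain ⟨x2, y2, rfl⟩ : ∃ x y, e2 = s(x, y) := by
        induction e2 using Sym2.ind with | _ x y => exact ⟨x, y, rfl⟩
      have hadj1 : G.Adj x1 y1 :=
        G.mem_edgeSet.1 (mem_edgeFinset.1 (Finset.mem_filter.1 he1).1)
      have hadj2 : G.Adj x2 y2 :=
        G.mem_edgeSet.1 (mem_edgeFinset.1 (Finset.mem_filter.1 he2').1)
      have hh1 : h s(x1, y1) = true := (Finset.mem_filter.1 he1).2
      have hh2 : h s(x2, y2) = true := (Finset.mem_filter.1 he2').2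
      set h' : Sym2 V → Bool :=
        fun e => if e = s(x1, y1) ∨ e = s(x2, y2) then false else h e with hh'def
      have hfilt : (G.edgeFinset.filter fun e => h' e = true) =
          (G.edgeFinset.filter fun e => h e = true) \ {s(x1, y1), s(x2, y2)} := by
        ext e
        by_cases he : e = s(x1, y1) ∨ e = s(x2, y2) <;>
          simp [hh'def, he] <;> tauto
      have hsub : ({s(x1, y1), s(x2, y2)} : Finset (Sym2 V)) ⊆
          G.edgeFinset.filter fun e => h e = true := by
        intro e he
        rcases Finset.mem_insert.1 he with rfl | he
        · exact he1
        · rw [Finset.mem_singleton.1 he]; exact he2'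
      have hcard' : (G.edgeFinset.filter fun e => h' e = true).card = n - 2 := by
        rw [hfilt, Finset.card_sdiff_of_subset hsub, hcard, Finset.card_pair (Ne.symm hne12)]
      have hev' : Even (n - 2) := by
        rw [Nat.even_iff] at hev ⊢; omega
      obtain ⟨a', ha1, ha2⟩ := ih (n - 2) (by omega) h' hcard' hev'
      obtain ⟨p⟩ := hconn.preconnected x1 x2
      refine ⟨fun v u => xor (a' v u)
        (xor (xor (decide (v = x1 ∧ u = y1)) (decide (v = x2 ∧ u = y2)))
          (wInd G p s(v, u))), fun v u hvu => ?_, fun v => ?_⟩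
      · have hW : wInd G p s(u, v) = wInd G p s(v, u) := by rw [Sym2.eq_swap]
        have boolkey : ∀ (A A' b c w T T' : Bool), xor A A' = T' →
            xor b c = xor T' T →
            xor (xor A (xor b w)) (xor A' (xor c w)) = T := by decide
        have hkey : xor (xor (decide (v = x1 ∧ u = y1)) (decide (v = x2 ∧ u = y2)))
            (xor (decide (u = x1 ∧ v = y1)) (decide (u = x2 ∧ v = y2)))
            = xor (h' s(v, u)) (h s(v, u)) := by
          by_cases hc1 : s(v, u) = s(x1, y1)
          · have hhv : h s(v, u) = true := by rw [hc1]; exact hh1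
            have hh'v : h' s(v, u) = false := by rw [hh'def]; exact if_pos (Or.inl hc1)
            rw [hhv, hh'v]
            have hA : ¬(v = x2 ∧ u = y2) := by
              rintro ⟨rfl, rfl⟩
              first
              | exact hne12 hc1 | exact hne12 hc1.symm
              | exact hne12 (Sym2.eq_swap.trans hc1) | simp_all [Sym2.eq_swap]
            have hB : ¬(u = x2 ∧ v = y2) := by
              rintro ⟨rfl, rfl⟩
              first
              | exact hne12 hc1 | exact hne12 hc1.symm
              | exact hne12 (Sym2.eq_swap.trans hc1)
              | exact hne12 (Sym2.eq_swap.trans hc1.symm) | simp_all [Sym2.eq_swap]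
            rcases Sym2.eq_iff.1 hc1 with ⟨rfl, rfl⟩ | ⟨rfl, rfl⟩ <;>
              simp [hA, hB, hadj1.ne, hadj1.ne']
          · by_cases hc2 : s(v, u) = s(x2, y2)
            · have hhv : h s(v, u) = true := by rw [hc2]; exact hh2
              have hh'v : h' s(v, u) = false := by rw [hh'def]; exact if_pos (Or.inr hc2)
              rw [hhv, hh'v]
              have hA : ¬(v = x1 ∧ u = y1) := by rintro ⟨rfl, rfl⟩; exact hc1 rfl
              have hB : ¬(u = x1 ∧ v = y1) := by
                rintro ⟨rfl, rfl⟩; exact hc1 Sym2.eq_swap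
              rcases Sym2.eq_iff.1 hc2 with ⟨rfl, rfl⟩ | ⟨rfl, rfl⟩ <;>
                simp [hA, hB, hadj2.ne, hadj2.ne']
            · have hh'v : h' s(v, u) = h s(v, u) := by
                rw [hh'def]; exact if_neg (not_or.2 ⟨hc1, hc2⟩)
              rw [hh'v, Bool.xor_self]
              have hA : ¬(v = x1 ∧ u = y1) := by rintro ⟨rfl, rfl⟩; exact hc1 rfl
              have hB : ¬(u = x1 ∧ v = y1) := by
                rintro ⟨rfl, rfl⟩; exact hc1 Sym2.eq_swap
              have hC : ¬(v = x2 ∧ u = y2) := by rintro ⟨rfl, rfl⟩; exact hc2 rfl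
              have hD : ¬(u = x2 ∧ v = y2) := by
                rintro ⟨rfl, rfl⟩; exact hc2 Sym2.eq_swap
              simp [hA, hB, hC, hD]
        simp only [hW]
        exact boolkey _ _ _ _ _ _ _ (ha1 v u hvu) hkey
      · rw [dP_xor, dP_xor, dP_xor, dP_pair G hadj1, dP_pair G hadj2, dP_wInd, ha2]
        split_ifs <;> decide


def mapFun (a : V → V → Bool)
    (hA : ∀ v, Even (((G.neighborFinset v).filter fun u => a v u = true)).card) :
    CFIVert G → CFIVert G := fun x =>
  match x with
  | ⟨.inl (v, T), hx⟩ =>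
      ⟨.inl (v, T ∆ ((G.neighborFinset v).filter fun u => a v u = true)),
        ⟨by
          intro u hu
          rcases Finset.mem_symmDiff.1 hu with ⟨h1, _⟩ | ⟨h1, _⟩
          · exact hx.1 h1
          · exact (Finset.mem_filter.1 h1).1,
        (even_symmDiff_card _ _).2 (iff_of_true hx.2 (hA v))⟩⟩
  | ⟨.inr (v, u, c), hx⟩ => ⟨.inr (v, u, xor c (a v u)), hx⟩

lemma mapFun_invol (a : V → V → Bool) (hA) :
    Function.Involutive (mapFun G a hA) := by
  rintro ⟨⟨v, T⟩ | ⟨v, u, c⟩, hx⟩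
  · apply Subtype.ext
    simp [mapFun, symmDiff_symmDiff_cancel_right]
  · apply Subtype.ext
    simp only [mapFun]
    cases c <;> cases a v u <;> rfl

lemma mapFun_color (a : V → V → Bool) (hA) (x : CFIVert G) :
    CFIColor G (mapFun G a hA x) = CFIColor G x := by
  rcases x with ⟨⟨v, T⟩ | ⟨v, u, c⟩, hx⟩ <;> rfl

lemma mapFun_adj (f g : Sym2 V → Bool) (a : V → V → Bool) (hA)
    (hxor : ∀ v u, G.Adj v u → xor (a v u) (a u v) = xor (f s(v, u)) (g s(v, u)))
    {x y : CFIVert G} (hadj : (CFIGraph G f).Adj x y) :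
    (CFIGraph G g).Adj (mapFun G a hA x) (mapFun G a hA y) := by
  have hinj := (mapFun_invol G a hA).injective
  simp only [CFIGraph, SimpleGraph.fromRel_adj] at hadj ⊢
  obtain ⟨hne, hr⟩ := hadj
  refine ⟨fun hEq => hne (hinj hEq), ?_⟩
  have bk : ∀ (c F Gb A A' : Bool), xor A A' = xor F Gb →
      xor (xor c F) A' = xor (xor c A) Gb := by decide
  obtain ⟨xv, hx⟩ := x
  obtain ⟨yv, hy⟩ := y
  rcases xv with ⟨v, T⟩ | ⟨v, u, c⟩ <;> rcases yv with ⟨w, S⟩ | ⟨w, u', c'⟩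
  · -- inl, inl
    simp only [mapFun]
    rcases hr with h | h <;> exact h.elim
  · -- inl, inr
    simp only [mapFun]
    rcases hr with ⟨rfl, rfl⟩ | h
    · left
      refine ⟨rfl, ?_⟩
      have hAdj : G.Adj v u' := hy
      have hmem : u' ∈ G.neighborFinset v := by
        rw [SimpleGraph.mem_neighborFinset]; exact hAdj
      have h1 : (u' ∈ (G.neighborFinset v).filter fun z => a v z = true) ↔
          a v u' = true := by simp [hmem]
      by_cases hT : u' ∈ T <;> by_cases ha' : a v u' = true <;>
        simp [Finset.mem_symmDiff, hT, ha', h1]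
    · exact h.elim
  · -- inr, inl
    simp only [mapFun]
    rcases hr with h | ⟨rfl, rfl⟩
    · exact h.elim
    · right
      refine ⟨rfl, ?_⟩
      have hAdj : G.Adj w u := hx
      have hmem : u ∈ G.neighborFinset w := by
        rw [SimpleGraph.mem_neighborFinset]; exact hAdj
      have h1 : (u ∈ (G.neighborFinset w).filter fun z => a w z = true) ↔
          a w u = true := by simp [hmem]
      by_cases hT : u ∈ S <;> by_cases ha' : a w u = true <;>
        simp [Finset.mem_symmDiff, hT, ha', h1, hAdj]
  · -- inr, inr
    simp only [mapFun]
    rcases hr with ⟨h1, h2, h3⟩ | ⟨h1, h2, h3⟩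
    · subst h1; subst h2; subst h3
      exact Or.inl ⟨rfl, rfl, bk c (f s(v, u)) (g s(v, u)) (a v u) (a u v)
        (hxor v u hx)⟩
    · subst h1; subst h2; subst h3
      exact Or.inr ⟨rfl, rfl, bk c' (f s(w, u')) (g s(w, u')) (a w u') (a u' w)
        (hxor w u' hy)⟩

end CFIAux



/-- If `f` and `g` have the same parity and `G` is a connected 3-regular graph,
then the CFI graphs `X_f(G)` and `X_g(G)` are isomorphic as colored graphs. -/
theorem cfi_iso_of_same_parity {V : Type*} [Fintype V] [DecidableEq V]
    (G : SimpleGraph V) [DecidableRel G.Adj]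
    (hconn : G.Connected) (hreg : ∀ v, G.degree v = 3)
    (f g : Sym2 V → Bool) (hpar : EvenParity G f ↔ EvenParity G g) :
    ∃ φ : CFIGraph G f ≃g CFIGraph G g, ∀ x, CFIColor G (φ x) = CFIColor G x := by
  classical
  have hpar' : Even ((G.edgeFinset.filter fun e => (xor (f e) (g e)) = true).card) := by
    have hfe : (G.edgeFinset.filter fun e => (xor (f e) (g e)) = true) =
        (G.edgeFinset.filter fun e => f e = true) ∆
          (G.edgeFinset.filter fun e => g e = true) := by
      ext e
      simp only [Finset.mem_symmDiff, Finset.mem_filter]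
      cases hf : f e <;> cases hg : g e <;> simp [hf, hg] <;> tauto
    rw [hfe, CFIAux.even_symmDiff_card]
    exact hpar
  obtain ⟨a, ha1, ha2⟩ := CFIAux.exists_a G hconn _ hpar'
  have hA : ∀ v, Even (((G.neighborFinset v).filter fun u => a v u = true)).card := by
    intro v
    rw [CFIAux.even_iff_cast_zero]
    calc ((((G.neighborFinset v).filter fun u => a v u = true)).card : ZMod 2)
        = ∑ u ∈ G.neighborFinset v, if a v u = true then 1 else 0 :=
          (Finset.sum_boole _ _).symm
      _ = CFIAux.dP G a v := rfl
      _ = 0 := ha2 v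
  have hxor' : ∀ v u, G.Adj v u →
      xor (a v u) (a u v) = xor (g s(v, u)) (f s(v, u)) := by
    intro v u hvu
    rw [Bool.xor_comm (g s(v, u))]
    exact ha1 v u hvu
  have hinv := CFIAux.mapFun_invol G a hA
  refine ⟨⟨Function.Involutive.toPerm _ hinv, ?_⟩, ?_⟩
  · intro x y
    constructor
    · intro hadj
      have h2 := CFIAux.mapFun_adj G g f a hA hxor' hadj
      simp only [Function.Involutive.coe_toPerm] at h2
      rwa [hinv x, hinv y] at h2
    · exact CFIAux.mapFun_adj G f g a hA ha1
  · intro x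
    exact CFIAux.mapFun_color G a hA x
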